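/- The Perazzo cubic f = x_0 u² + x_1 u v + x_2 v² in K[x_0, x_1, x_2, u, v] has identically vanishing Hessian determinant, but its five partial derivatives are linearly independent (so V(f) ⊂ P^4 is not a cone). -/

import Mathlib

/-!
The first three partials `u², uv, v²` of the Perazzo cubic satisfy `g(∇f) = 0` for
`g = y₀ y₂ - y₁²`. Differentiating this relation by the chain rule shows that `(∇g)(∇f)`, which is
`(v², -2uv, u², 0, 0) ≠ 0`, lies in the left kernel of the Hessian, so its determinant vanishes
(Gordan–Noether). Independence of the partials follows by evaluating them at five points where the
matrix of values is invertible.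
-/

open MvPolynomial
open scoped Matrix

namespace MvPolynomial

variable {R σ : Type*}

section CommSemiring

variable [CommSemiring R]

theorem pderiv_pderiv_comm (i j : σ) (p : MvPolynomial σ R) :
    pderiv i (pderiv j p) = pderiv j (pderiv i p) := by
  classical
  induction p using MvPolynomial.induction_on with
  | C a => simp
  | add p r hp hr => simp only [map_add, hp, hr]
  | mul_X p k hp =>
    have hX : ∀ l m : σ, pderiv l (pderiv m (X k : MvPolynomial σ R)) = 0 := fun l m => by
      rw [pderiv_X, Pi.single_apply]; split_ifs <;> simp
    simp only [pderiv_mul, map_add, hp, hX]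
    ring

theorem pderiv_aeval {τ : Type*} [Fintype τ] (i : σ) (q : τ → MvPolynomial σ R)
    (g : MvPolynomial τ R) :
    pderiv i (aeval q g) = ∑ k, aeval q (pderiv k g) * pderiv i (q k) := by
  classical
  induction g using MvPolynomial.induction_on with
  | C a => simp [algebraMap_eq]
  | add p r hp hr => simp only [map_add, hp, hr, add_mul, Finset.sum_add_distrib]
  | mul_X p k hp =>
    simp only [map_mul, aeval_X, pderiv_mul, hp, map_add, pderiv_X, add_mul, Finset.sum_add_distrib,
      Pi.single_apply, mul_ite, mul_one, mul_zero, apply_ite (aeval q), map_zero,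
      ite_mul, zero_mul, Finset.sum_ite_eq, Finset.mem_univ, if_true, Finset.sum_mul]
    congr 1
    exact Finset.sum_congr rfl fun x _ => mul_right_comm _ _ _

noncomputable def hessian (f : MvPolynomial σ R) : Matrix σ σ (MvPolynomial σ R) :=
  Matrix.of fun i j => pderiv i (pderiv j f)

theorem vecMul_hessian_eq_zero_of_aeval_pderiv_eq_zero [Fintype σ] {f g : MvPolynomial σ R}
    (h : aeval (fun k => pderiv k f) g = 0) :
    (fun k => aeval (fun k => pderiv k f) (pderiv k g)) ᵥ* hessian f = 0 := by
  funext j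
  calc ∑ k, aeval (fun k => pderiv k f) (pderiv k g) * pderiv k (pderiv j f)
      = pderiv j (aeval (fun k => pderiv k f) g) := by
        simp only [pderiv_aeval, pderiv_pderiv_comm j]
    _ = 0 := by rw [h, map_zero]

end CommSemiring

variable [CommRing R] [IsDomain R]

theorem det_hessian_eq_zero_of_aeval_pderiv_eq_zero [Fintype σ] [DecidableEq σ]
    {f g : MvPolynomial σ R} (h : aeval (fun k => pderiv k f) g = 0)
    (hg : (fun k => aeval (fun k => pderiv k f) (pderiv k g)) ≠ 0) :
    (hessian f).det = 0 :=
  Matrix.exists_vecMul_eq_zero_iff.mp ⟨_, hg, vecMul_hessian_eq_zero_of_aeval_pderiv_eq_zero h⟩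

theorem linearIndependent_of_det_aeval_ne_zero {ι : Type*} [Fintype ι] [DecidableEq ι]
    {p : ι → MvPolynomial σ R} (c : ι → σ → R)
    (h : (Matrix.of fun i j => aeval (c j) (p i)).det ≠ 0) :
    LinearIndependent R p :=
  LinearIndependent.of_comp (LinearMap.pi fun j => (aeval (c j)).toLinearMap)
    (Matrix.linearIndependent_rows_of_det_ne_zero h)

end MvPolynomial

noncomputable def perazzoCubic (R : Type*) [CommSemiring R] : MvPolynomial (Fin 5) R :=
  X 0 * X 3 ^ 2 + X 1 * X 3 * X 4 + X 2 * X 4 ^ 2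

theorem pderiv_perazzoCubic {R : Type*} [CommSemiring R] :
    (fun i => pderiv i (perazzoCubic R)) =
      ![X 3 ^ 2, X 3 * X 4, X 4 ^ 2, 2 * X 0 * X 3 + X 1 * X 4, X 1 * X 3 + 2 * X 2 * X 4] := by
  funext i
  fin_cases i <;> simp [perazzoCubic] <;> ring

section

variable {R : Type*} [CommRing R] [IsDomain R]

theorem det_hessian_perazzoCubic : (hessian (perazzoCubic R)).det = 0 := by
  refine det_hessian_eq_zero_of_aeval_pderiv_eq_zero (g := X 0 * X 2 - X 1 ^ 2) ?_ ?_
  · rw [pderiv_perazzoCubic]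
    simp only [map_sub, map_mul, map_pow, aeval_X, Matrix.cons_val]
    ring
  · rw [pderiv_perazzoCubic, Function.ne_iff]
    exact ⟨0, by simp [X_ne_zero]⟩

theorem linearIndependent_pderiv_perazzoCubic :
    LinearIndependent R fun i => pderiv i (perazzoCubic R) := by
  rw [pderiv_perazzoCubic]
  refine linearIndependent_of_det_aeval_ne_zero
    ![![0, 0, 0, 1, 0], ![0, 0, 0, 0, 1], ![0, 0, 0, 1, 1], ![0, 1, 0, 0, 1], ![0, 1, 0, 1, 0]] ?_
  simp [Matrix.det_succ_row_zero, Fin.sum_univ_succ, Fin.succAbove]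

end

theorem perazzo_cubic_hessian_zero_not_cone_general
    {K : Type*} [Field K]
    (f : MvPolynomial (Fin 5) K)
    (hf : f = X 0 * X 3 ^ 2 + X 1 * X 3 * X 4 + X 2 * X 4 ^ 2) :
    Matrix.det (Matrix.of fun i j : Fin 5 => pderiv i (pderiv j f)) = 0 ∧
      LinearIndependent K (fun i : Fin 5 => pderiv i f) := by
  subst hf
  exact ⟨det_hessian_perazzoCubic, linearIndependent_pderiv_perazzoCubic⟩

/-- The Perazzo cubic `f = x₀u² + x₁uv + x₂v²` (variables `x₀,x₁,x₂,u,v` indexed by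
`0,1,2,3,4`) has identically vanishing Hessian determinant, yet its five partial
derivatives are linearly independent, i.e. `V(f) ⊂ ℙ⁴` is not a cone. -/
theorem perazzo_cubic_hessian_zero_not_cone
    {K : Type*} [Field K] [CharZero K]
    (f : MvPolynomial (Fin 5) K)
    (hf : f = X 0 * X 3 ^ 2 + X 1 * X 3 * X 4 + X 2 * X 4 ^ 2) :
    Matrix.det (Matrix.of fun i j : Fin 5 => pderiv i (pderiv j f)) = 0 ∧
      LinearIndependent K (fun i : Fin 5 => pderiv i f) :=
  perazzo_cubic_hessian_zero_not_cone_general f hf
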